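/- Let 0 < μ < 1, 0 < ν, μ + ν < 1, let N > 0 be a real number (the sample size), let f_H > 0 be a real number (the value of the GPD density at the quantile q^H_{ν/(1−μ)}), and set f_C = (1 − μ)·f_H (the value of the overall cost density at the quantile q_{μ+ν}). Define the EVO variance Ω₁ = ν(1 − μ − ν)/(N(1 − μ)²·f_H²) and the quantile-regression variance Ω₂ = (μ + ν)(1 − μ − ν)/(N·f_C²). Then Ω₂ = (μ + ν)(1 − μ − ν)/(N(1 − μ)²·f_H²), and Ω₁ < Ω₂. -/
import Mathlib

/-- **EVO variance vs quantile regression variance.** For `0 < μ < 1`, `0 < ν`,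
`μ + ν < 1`, sample size `N > 0`, GPD density value `f_H > 0` and overall cost
density value `f_C = (1 − μ)·f_H`, the EVO variance
`Ω₁ = ν(1 − μ − ν)/(N(1 − μ)²f_H²)` and the quantile-regression variance
`Ω₂ = (μ + ν)(1 − μ − ν)/(N f_C²)` satisfy
`Ω₂ = (μ + ν)(1 − μ − ν)/(N(1 − μ)²f_H²)` and `Ω₁ < Ω₂`. -/
theorem evo_variance_lt_quantile_regression_variance
    (μ ν N fH fC : ℝ) (hμ0 : 0 < μ) (hμ1 : μ < 1) (hν : 0 < ν)
    (hμν : μ + ν < 1) (hN : 0 < N) (hfH : 0 < fH)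
    (hfC : fC = (1 - μ) * fH)
    (Ω₁ Ω₂ : ℝ)
    (hΩ₁ : Ω₁ = ν * (1 - μ - ν) / (N * (1 - μ) ^ 2 * fH ^ 2))
    (hΩ₂ : Ω₂ = (μ + ν) * (1 - μ - ν) / (N * fC ^ 2)) :
    Ω₂ = (μ + ν) * (1 - μ - ν) / (N * (1 - μ) ^ 2 * fH ^ 2) ∧ Ω₁ < Ω₂ := by
  have h1 : (0:ℝ) < 1 - μ := by linarith
  have heq : Ω₂ = (μ + ν) * (1 - μ - ν) / (N * (1 - μ) ^ 2 * fH ^ 2) := by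
    rw [hΩ₂, hfC]; ring_nf
  refine ⟨heq, ?_⟩
  rw [hΩ₁, heq]
  have hden : (0:ℝ) < N * (1 - μ) ^ 2 * fH ^ 2 := by positivity
  have hnum : ν * (1 - μ - ν) < (μ + ν) * (1 - μ - ν) := by nlinarith
  exact div_lt_div_of_pos_right hnum hden
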